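/- arXiv:1402.0599 — 8 statements merged into one kernel-verified Lean document; each statement's English description precedes it below -/
import Mathlib

section
/- Let Π and Y be symmetric positive definite m×m real matrices. Let μ be the measure on ℝᵐ with density y ↦ ((2π)^m · det Π)^{−1/2} · exp(−½ yᵀΠ⁻¹y) with respect to Lebesgue measure (the N(0, Π) Gaussian measure), and let ν be the uniform probability measure on the interval [0,1]. Then under the product measure μ × ν, the probability of the event {(y, ζ) : ζ > exp(−½ yᵀYy)} equals 1 − (det(I + Π Y))^{−1/2}. -/
/-! Integrating out the uniform coordinate first, the event has conditional probability
`1 - exp (-½ yᵀYy)` given `y`, so its probability is the normalised integral of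
`exp (-½ yᵀΠ⁻¹y) (1 - exp (-½ yᵀYy))`, a difference of two Gaussian integrals with precision
matrices `Π⁻¹` and `Π⁻¹ + Y`. Writing a positive definite `A` as `BᵀB`, the change of variables
`x = By` gives `∫ exp (-½ yᵀAy) dy = (2π)^(m/2) / √(det A)`, and
`det Π · det (Π⁻¹ + Y) = det (I + ΠY)`. -/

open Matrix MeasureTheory Real Set
open scoped MatrixOrder

theorem Real.rpow_neg_one_div_two {x : ℝ} (hx : 0 ≤ x) : x ^ (-(1 : ℝ) / 2) = (√x)⁻¹ := by
  rw [neg_div, rpow_neg hx, sqrt_eq_rpow]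

theorem Real.sqrt_pow {x : ℝ} (hx : 0 ≤ x) (n : ℕ) : √(x ^ n) = √x ^ n := by
  rw [sqrt_eq_rpow, sqrt_eq_rpow, ← rpow_natCast, ← rpow_natCast, ← rpow_mul hx, ← rpow_mul hx,
    mul_comm]

namespace Matrix

variable {ι : Type*} [Fintype ι]

theorem dotProduct_mulVec_transpose_mul_self (B : Matrix ι ι ℝ) (y : ι → ℝ) :
    y ⬝ᵥ ((Bᵀ * B) *ᵥ y) = (B *ᵥ y) ⬝ᵥ (B *ᵥ y) := by
  rw [← mulVec_mulVec, dotProduct_mulVec, vecMul_transpose]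

theorem exp_neg_half_dotProduct_self (x : ι → ℝ) :
    exp (-(1 / 2) * (x ⬝ᵥ x)) = ∏ i, exp (-(1 / 2) * x i ^ 2) := by
  simp only [← exp_sum, dotProduct, Finset.mul_sum, sq]

theorem integrable_exp_neg_half_dotProduct_self :
    Integrable fun x : ι → ℝ => exp (-(1 / 2) * (x ⬝ᵥ x)) := by
  simp_rw [exp_neg_half_dotProduct_self]
  exact Integrable.fintype_prod fun _ => integrable_exp_neg_mul_sq (by norm_num)

theorem integral_exp_neg_half_dotProduct_self :
    ∫ x : ι → ℝ, exp (-(1 / 2) * (x ⬝ᵥ x)) = √(2 * π) ^ Fintype.card ι := by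
  simp_rw [exp_neg_half_dotProduct_self]
  rw [volume_pi, integral_fintype_prod_eq_pow (fun t => exp (-(1 / 2) * t ^ 2)),
    integral_gaussian]
  norm_num [div_div_eq_mul_div, mul_comm]

theorem PosSemidef.exp_neg_half_dotProduct_mulVec_le_one {B : Matrix ι ι ℝ} (hB : B.PosSemidef)
    (y : ι → ℝ) : exp (-(1 / 2) * (y ⬝ᵥ (B *ᵥ y))) ≤ 1 := by
  have := hB.dotProduct_mulVec_nonneg y
  rw [star_trivial] at this
  exact exp_le_one_iff.mpr (by linarith)

variable [DecidableEq ι]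

theorem integrable_comp_mulVec {B : Matrix ι ι ℝ} (hB : B.det ≠ 0) {g : (ι → ℝ) → ℝ}
    (hg : Integrable g) : Integrable fun y => g (B *ᵥ y) := by
  have hmap := Real.map_matrix_volume_pi_eq_smul_volume_pi hB
  have hg' : Integrable g (Measure.map (toLin' B) volume) := by
    rw [hmap]; exact hg.smul_measure ENNReal.ofReal_ne_top
  exact (integrable_map_measure hg'.aestronglyMeasurable
    (LinearMap.continuous_on_pi _).aemeasurable).mp hg'

theorem integral_comp_mulVec {B : Matrix ι ι ℝ} (hB : B.det ≠ 0) {g : (ι → ℝ) → ℝ}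
    (hg : AEStronglyMeasurable g) : ∫ y, g (B *ᵥ y) = |B.det|⁻¹ * ∫ x, g x := by
  have hmap := Real.map_matrix_volume_pi_eq_smul_volume_pi hB
  rw [abs_inv] at hmap
  have hg' : AEStronglyMeasurable g (Measure.map (toLin' B) volume) := by
    rw [hmap]; exact hg.smul_measure _
  rw [← smul_eq_mul, ← ENNReal.toReal_ofReal (inv_nonneg.mpr (abs_nonneg B.det)),
    ← integral_smul_measure, ← hmap,
    integral_map (LinearMap.continuous_on_pi _).aemeasurable hg']
  rfl

theorem PosDef.exists_det_and_dotProduct_mulVec_eq {A : Matrix ι ι ℝ} (hA : A.PosDef) :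
    ∃ B : Matrix ι ι ℝ, |B.det| = √A.det ∧ ∀ y, y ⬝ᵥ (A *ᵥ y) = (B *ᵥ y) ⬝ᵥ (B *ᵥ y) := by
  obtain ⟨B, rfl⟩ := CStarAlgebra.nonneg_iff_eq_star_mul_self.mp hA.posSemidef.nonneg
  have hB : star B = Bᵀ := conjTranspose_eq_transpose_of_trivial B
  refine ⟨B, ?_, by simp [hB, dotProduct_mulVec_transpose_mul_self]⟩
  rw [hB, det_mul, det_transpose, sqrt_mul_self_eq_abs]

theorem PosDef.integrable_exp_neg_half_dotProduct_mulVec {A : Matrix ι ι ℝ} (hA : A.PosDef) :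
    Integrable fun y : ι → ℝ => exp (-(1 / 2) * (y ⬝ᵥ (A *ᵥ y))) := by
  obtain ⟨B, hdet, hquad⟩ := hA.exists_det_and_dotProduct_mulVec_eq
  have hB : B.det ≠ 0 := abs_pos.mp (hdet ▸ sqrt_pos.mpr hA.det_pos)
  simpa only [hquad] using integrable_comp_mulVec hB integrable_exp_neg_half_dotProduct_self

theorem PosDef.integral_exp_neg_half_dotProduct_mulVec {A : Matrix ι ι ℝ} (hA : A.PosDef) :
    ∫ y : ι → ℝ, exp (-(1 / 2) * (y ⬝ᵥ (A *ᵥ y))) = √(2 * π) ^ Fintype.card ι / √A.det := by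
  obtain ⟨B, hdet, hquad⟩ := hA.exists_det_and_dotProduct_mulVec_eq
  have hB : B.det ≠ 0 := abs_pos.mp (hdet ▸ sqrt_pos.mpr hA.det_pos)
  simp_rw [hquad]
  rw [integral_comp_mulVec (g := fun x => exp (-(1 / 2) * (x ⬝ᵥ x))) hB (by fun_prop), hdet,
    integral_exp_neg_half_dotProduct_self, inv_mul_eq_div]

theorem PosDef.lintegral_exp_neg_half_mul_one_sub_exp {A B : Matrix ι ι ℝ} (hA : A.PosDef)
    (hB : B.PosSemidef) :
    ∫⁻ y : ι → ℝ, ENNReal.ofReal (exp (-(1 / 2) * (y ⬝ᵥ (A *ᵥ y)))) *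
        ENNReal.ofReal (1 - exp (-(1 / 2) * (y ⬝ᵥ (B *ᵥ y)))) =
      ENNReal.ofReal (√(2 * π) ^ Fintype.card ι / √A.det -
        √(2 * π) ^ Fintype.card ι / √(A + B).det) := by
  have hAB : (A + B).PosDef := hA.add_posSemidef hB
  have hsplit (y : ι → ℝ) : exp (-(1 / 2) * (y ⬝ᵥ (A *ᵥ y))) *
      (1 - exp (-(1 / 2) * (y ⬝ᵥ (B *ᵥ y)))) =
      exp (-(1 / 2) * (y ⬝ᵥ (A *ᵥ y))) - exp (-(1 / 2) * (y ⬝ᵥ ((A + B) *ᵥ y))) := by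
    rw [mul_one_sub, ← exp_add, add_mulVec, dotProduct_add, mul_add]
  have hintA := hA.integrable_exp_neg_half_dotProduct_mulVec
  have hintAB := hAB.integrable_exp_neg_half_dotProduct_mulVec
  have hnonneg : 0 ≤ᵐ[volume] fun y => exp (-(1 / 2) * (y ⬝ᵥ (A *ᵥ y))) -
      exp (-(1 / 2) * (y ⬝ᵥ ((A + B) *ᵥ y))) := ae_of_all _ fun y =>
    (mul_nonneg (exp_pos _).le
      (sub_nonneg.mpr (hB.exp_neg_half_dotProduct_mulVec_le_one y))).trans_eq (hsplit y)
  have hint : ∫ y, exp (-(1 / 2) * (y ⬝ᵥ (A *ᵥ y))) - exp (-(1 / 2) * (y ⬝ᵥ ((A + B) *ᵥ y))) =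
      √(2 * π) ^ Fintype.card ι / √A.det - √(2 * π) ^ Fintype.card ι / √(A + B).det := by
    rw [integral_sub hintA hintAB, hA.integral_exp_neg_half_dotProduct_mulVec,
      hAB.integral_exp_neg_half_dotProduct_mulVec]
  simp_rw [← ENNReal.ofReal_mul (exp_pos _).le, hsplit]
  rw [← hint]
  exact (ofReal_integral_eq_lintegral_ofReal (hintA.sub hintAB) hnonneg).symm

theorem det_one_add_mul {K : Type*} [Field K] {P Y : Matrix ι ι K} (hP : IsUnit P.det) :
    (1 + P * Y).det = P.det * (P⁻¹ + Y).det := by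
  rw [← det_mul, mul_add, mul_nonsing_inv _ hP]

end Matrix

theorem prod_volume_Icc_zero_one_setOf_lt {α : Type*} [MeasurableSpace α] (μ : Measure α)
    {f : α → ℝ} (hf : Measurable f) (hf0 : ∀ x, 0 ≤ f x) :
    μ.prod (volume.restrict (Icc (0 : ℝ) 1)) {p | f p.1 < p.2} =
      ∫⁻ x, ENNReal.ofReal (1 - f x) ∂μ := by
  have hS : MeasurableSet {p : α × ℝ | f p.1 < p.2} := measurableSet_lt (by fun_prop) measurable_snd
  rw [Measure.prod_apply hS]
  refine lintegral_congr fun x => ?_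
  have hslice : Ioi (f x) ∩ Icc 0 1 = Ioc (f x) 1 := by
    ext t
    simp only [mem_inter_iff, mem_Ioi, mem_Icc, mem_Ioc]
    exact ⟨fun ⟨hlt, _, hle⟩ => ⟨hlt, hle⟩, fun ⟨hlt, hle⟩ => ⟨hlt, (hf0 x).trans hlt.le, hle⟩⟩
  rw [show Prod.mk x ⁻¹' {p : α × ℝ | f p.1 < p.2} = Ioi (f x) from rfl,
    Measure.restrict_apply measurableSet_Ioi, hslice, volume_Ioc]

/-- Communication rate of the open-loop stochastic event-triggered schedule:
if `μ` is the `N(0, Π)` Gaussian measure on `ℝᵐ` (density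
`((2π)^m det Π)^{−1/2} exp(−½ yᵀΠ⁻¹y)` w.r.t. Lebesgue) and `ν` is the uniform
probability measure on `[0,1]`, then the `μ × ν`-probability of
`{(y, ζ) : ζ > exp(−½ yᵀYy)}` equals `1 − (det(I + Π Y))^{−1/2}`. -/
theorem stmt_3 {m : ℕ} (Pmat Y : Matrix (Fin m) (Fin m) ℝ)
    (hP : Pmat.PosDef) (hY : Y.PosDef)
    (μ : Measure (Fin m → ℝ)) (ν : Measure ℝ)
    (hμ : μ = (volume : Measure (Fin m → ℝ)).withDensity (fun y =>
        ENNReal.ofReal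
          (((2 * Real.pi) ^ m * Pmat.det) ^ (-(1 : ℝ) / 2) *
            Real.exp (-(1 / 2) * (y ⬝ᵥ (Pmat⁻¹ *ᵥ y))))))
    (hν : ν = (volume : Measure ℝ).restrict (Set.Icc (0 : ℝ) 1)) :
    μ.prod ν {p : (Fin m → ℝ) × ℝ | Real.exp (-(1 / 2) * (p.1 ⬝ᵥ (Y *ᵥ p.1))) < p.2} =
      ENNReal.ofReal (1 - ((1 + Pmat * Y).det) ^ (-(1 : ℝ) / 2)) := by
  subst hμ hν
  have hdetP : 0 < Pmat.det := hP.det_pos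
  have hdetQ : 0 < (Pmat⁻¹ + Y).det := (hP.inv.add_posSemidef hY.posSemidef).det_pos
  rw [prod_volume_Icc_zero_one_setOf_lt (f := fun y => exp (-(1 / 2) * (y ⬝ᵥ (Y *ᵥ y)))) _
      (by fun_prop) fun _ => (exp_pos _).le,
    lintegral_withDensity_eq_lintegral_mul _ (by fun_prop) (by fun_prop)]
  have hc : 0 ≤ ((2 * π) ^ m * Pmat.det) ^ (-(1 : ℝ) / 2) := by positivity
  simp only [Pi.mul_apply, ENNReal.ofReal_mul hc, mul_assoc]
  rw [lintegral_const_mul _ (by fun_prop),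
    hP.inv.lintegral_exp_neg_half_mul_one_sub_exp hY.posSemidef,
    ← ENNReal.ofReal_mul hc, det_one_add_mul hdetP.ne'.isUnit]
  congr 1
  rw [Fintype.card_fin, det_nonsing_inv, Ring.inverse_eq_inv', sqrt_inv,
    rpow_neg_one_div_two (by positivity), rpow_neg_one_div_two (by positivity),
    sqrt_mul (by positivity), sqrt_mul hdetP.le, sqrt_pow (by positivity)]
  field_simp
end

section
/- Let A be an n×n real matrix, C an m×n real matrix, Q a symmetric positive semidefinite n×n real matrix, and W a symmetric positive definite m×m real matrix. Define g_W(X) = A X Aᵀ + Q − A X Cᵀ(C X Cᵀ + W)⁻¹ C X Aᵀ for symmetric positive semidefinite X. Then g_W is monotone with respect to the Loewner order: if X₁ and X₂ are symmetric positive semidefinite with X₁ ≤ X₂, then g_W(X₁) ≤ g_W(X₂). -/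
open Matrix

/-- The Riccati-type map `g_W(X) = A X Aᵀ + Q − A X Cᵀ(C X Cᵀ + W)⁻¹ C X Aᵀ`. -/
noncomputable def gmap {n m : ℕ} (A : Matrix (Fin n) (Fin n) ℝ)
    (C : Matrix (Fin m) (Fin n) ℝ) (Q : Matrix (Fin n) (Fin n) ℝ)
    (W : Matrix (Fin m) (Fin m) ℝ) (X : Matrix (Fin n) (Fin n) ℝ) :
    Matrix (Fin n) (Fin n) ℝ :=
  A * X * Aᵀ + Q - A * X * Cᵀ * (C * X * Cᵀ + W)⁻¹ * C * X * Aᵀ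

/-- Expansion of a conjugation `(K - P M) S (K - P M)ᵀ` when `M` is a symmetric
two-sided inverse of `S`. -/
lemma aux1 {n m : ℕ} (K P : Matrix (Fin n) (Fin m) ℝ) (S M : Matrix (Fin m) (Fin m) ℝ)
    (hMS : M * S = 1) (hSM : S * M = 1) (hMT : Mᵀ = M) :
    (K - P * M) * S * (K - P * M)ᵀ = K * S * Kᵀ - K * Pᵀ - P * Kᵀ + P * M * Pᵀ := by
  have h1 : P * M * S = P := by rw [Matrix.mul_assoc, hMS, Matrix.mul_one]
  have h2 : K * S * (M * Pᵀ) = K * Pᵀ := by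
    rw [Matrix.mul_assoc K S, ← Matrix.mul_assoc S, hSM, Matrix.one_mul]
  rw [transpose_sub, transpose_mul, hMT, Matrix.sub_mul, h1, Matrix.sub_mul, Matrix.mul_sub,
    Matrix.mul_sub, h2, ← Matrix.mul_assoc P M]
  abel

/-- `C X Cᵀ + W` is positive definite for `X` PSD and `W` positive definite. -/
lemma S_posdef {n m : ℕ} (C : Matrix (Fin m) (Fin n) ℝ) {W : Matrix (Fin m) (Fin m) ℝ}
    (hW : W.PosDef) {X : Matrix (Fin n) (Fin n) ℝ} (hX : X.PosSemidef) :
    (C * X * Cᵀ + W).PosDef := by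
  have h1 : (C * X * Cᵀ).PosSemidef := by
    simpa [conjTranspose_eq_transpose_of_trivial] using hX.mul_mul_conjTranspose_same C
  exact Matrix.PosDef.posSemidef_add h1 hW

set_option maxHeartbeats 2000000 in
/-- Optimality identity: for any gain `K`, the filter cost exceeds `gmap` by the
conjugation `(K - K_X) S (K - K_X)ᵀ`. -/
lemma phi_sub_gmap {n m : ℕ} (A : Matrix (Fin n) (Fin n) ℝ)
    (C : Matrix (Fin m) (Fin n) ℝ) (Q : Matrix (Fin n) (Fin n) ℝ)
    {W : Matrix (Fin m) (Fin m) ℝ} (hW : W.PosDef)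
    {X : Matrix (Fin n) (Fin n) ℝ} (hX : X.PosSemidef)
    (K : Matrix (Fin n) (Fin m) ℝ) :
    (A - K * C) * X * (A - K * C)ᵀ + K * W * Kᵀ + Q - gmap A C Q W X
      = (K - A * X * Cᵀ * (C * X * Cᵀ + W)⁻¹) * (C * X * Cᵀ + W)
          * (K - A * X * Cᵀ * (C * X * Cᵀ + W)⁻¹)ᵀ := by
  have hSpd := S_posdef C hW hX
  set S := C * X * Cᵀ + W with hS
  have hdet : IsUnit S.det := (Matrix.isUnit_iff_isUnit_det S).mp hSpd.isUnit
  have hMS : S⁻¹ * S = 1 := Matrix.nonsing_inv_mul S hdet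
  have hSM : S * S⁻¹ = 1 := Matrix.mul_nonsing_inv S hdet
  have hST : Sᵀ = S := by
    have := hSpd.isHermitian
    rwa [Matrix.IsHermitian, conjTranspose_eq_transpose_of_trivial] at this
  have hMT : (S⁻¹)ᵀ = S⁻¹ := by rw [Matrix.transpose_nonsing_inv, hST]
  have hXT : Xᵀ = X := by
    have := hX.isHermitian
    rwa [Matrix.IsHermitian, conjTranspose_eq_transpose_of_trivial] at this
  rw [aux1 K (A * X * Cᵀ) S S⁻¹ hMS hSM hMT]
  have hKS : K * S * Kᵀ = K * (C * X * Cᵀ) * Kᵀ + K * W * Kᵀ := by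
    rw [hS, Matrix.mul_add, Matrix.add_mul]
  rw [hKS, gmap, ← hS]
  obtain ⟨M, hM⟩ : ∃ M, S⁻¹ = M := ⟨_, rfl⟩
  rw [hM]
  simp only [transpose_sub, transpose_mul, transpose_transpose, hXT, Matrix.sub_mul,
    Matrix.mul_sub, Matrix.add_mul, Matrix.mul_add, Matrix.mul_assoc]
  abel

/-- Monotonicity of `g_W` in the Loewner order: if `X₁ ≤ X₂` (both positive
semidefinite) then `g_W(X₁) ≤ g_W(X₂)`, for `Q` positive semidefinite and `W`
positive definite. -/
theorem stmt_4 {n m : ℕ} (A : Matrix (Fin n) (Fin n) ℝ)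
    (C : Matrix (Fin m) (Fin n) ℝ) (Q : Matrix (Fin n) (Fin n) ℝ)
    (W : Matrix (Fin m) (Fin m) ℝ)
    (hQ : Q.PosSemidef) (hW : W.PosDef)
    (X₁ X₂ : Matrix (Fin n) (Fin n) ℝ)
    (hX₁ : X₁.PosSemidef) (hX₂ : X₂.PosSemidef)
    (hle : (X₂ - X₁).PosSemidef) :
    (gmap A C Q W X₂ - gmap A C Q W X₁).PosSemidef := by
  set K₂ := A * X₂ * Cᵀ * (C * X₂ * Cᵀ + W)⁻¹ with hK₂
  set K₁ := A * X₁ * Cᵀ * (C * X₁ * Cᵀ + W)⁻¹ with hK₁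
  have e₁ := phi_sub_gmap A C Q hW hX₁ K₂
  have e₂ := phi_sub_gmap A C Q hW hX₂ K₂
  rw [← hK₂, sub_self, Matrix.zero_mul, Matrix.zero_mul, sub_eq_zero] at e₂
  have hdiff : gmap A C Q W X₂ - gmap A C Q W X₁ =
      (K₂ - K₁) * (C * X₁ * Cᵀ + W) * (K₂ - K₁)ᵀ
        + (A - K₂ * C) * (X₂ - X₁) * (A - K₂ * C)ᵀ := by
    rw [← hK₁] at e₁
    rw [← e₂, ← e₁, Matrix.mul_sub (A - K₂ * C), Matrix.sub_mul ((A - K₂ * C) * X₂)]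
    abel
  rw [hdiff]
  have psd1 : ((K₂ - K₁) * (C * X₁ * Cᵀ + W) * (K₂ - K₁)ᵀ).PosSemidef := by
    simpa [conjTranspose_eq_transpose_of_trivial] using
      (S_posdef C hW hX₁).posSemidef.mul_mul_conjTranspose_same (K₂ - K₁)
  have psd2 : ((A - K₂ * C) * (X₂ - X₁) * (A - K₂ * C)ᵀ).PosSemidef := by
    simpa [conjTranspose_eq_transpose_of_trivial] using
      hle.mul_mul_conjTranspose_same (A - K₂ * C)
  exact psd1.add psd2
end

section
/- Let A be an n×n real matrix, C an m×n real matrix, Q a symmetric positive semidefinite n×n real matrix, and let W₁, W₂ be symmetric positive definite m×m real matrices with W₁ ≤ W₂ in the Loewner order. Define g_W(X) = A X Aᵀ + Q − A X Cᵀ(C X Cᵀ + W)⁻¹ C X Aᵀ. Then for every symmetric positive semidefinite n×n matrix X, g_{W₁}(X) ≤ g_{W₂}(X). -/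
/-!
With `K = A X Cᵀ` and `Sᵢ = C X Cᵀ + Wᵢ`, the difference `g_{W₂}(X) - g_{W₁}(X)` is the congruence
`K (S₁⁻¹ - S₂⁻¹) Kᵀ`, so it suffices that inversion is antitone on positive definite matrices.
That follows from the identity `S⁻¹ - T⁻¹ = T⁻¹ (D + D S⁻¹ D) T⁻¹` for `D = T - S`.
-/

open Matrix

theorem Matrix.PosDef.posSemidef_inv_sub_inv {n K : Type*} [Fintype n] [DecidableEq n] [Field K]
    [PartialOrder K] [StarRing K] [AddLeftMono K] {S T : Matrix n n K}
    (hS : S.PosDef) (hST : (T - S).PosSemidef) : (S⁻¹ - T⁻¹).PosSemidef := by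
  set D := T - S
  have hT : T.PosDef := by simpa [D] using hS.add_posSemidef hST
  have hS_det := (isUnit_iff_isUnit_det S).mp hS.isUnit
  have hT_det := (isUnit_iff_isUnit_det T).mp hT.isUnit
  have key : S⁻¹ - T⁻¹ = T⁻¹ * (D + D * S⁻¹ * D) * T⁻¹ := by
    have hDSD : D + D * S⁻¹ * D = T * S⁻¹ * T - T := by
      simp only [D, sub_mul, mul_sub, mul_assoc, mul_nonsing_inv S hS_det,
        nonsing_inv_mul S hS_det, one_mul, mul_one]
      abel
    rw [hDSD]
    simp only [mul_sub, sub_mul, ← mul_assoc, nonsing_inv_mul T hT_det, one_mul]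
    simp only [mul_assoc, mul_nonsing_inv T hT_det, mul_one]
  have := (hST.add (hS.inv.posSemidef.conjTranspose_mul_mul_same D)).mul_mul_conjTranspose_same T⁻¹
  rwa [hST.isHermitian.eq, hT.inv.isHermitian.eq, ← key] at this

theorem gmap_sub_gmap {n m : ℕ} (A : Matrix (Fin n) (Fin n) ℝ) (C : Matrix (Fin m) (Fin n) ℝ)
    (Q : Matrix (Fin n) (Fin n) ℝ) (W₁ W₂ : Matrix (Fin m) (Fin m) ℝ)
    (X : Matrix (Fin n) (Fin n) ℝ) :
    gmap A C Q W₂ X - gmap A C Q W₁ X =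
      A * X * Cᵀ * ((C * X * Cᵀ + W₁)⁻¹ - (C * X * Cᵀ + W₂)⁻¹) * (C * X * Aᵀ) := by
  simp only [gmap, Matrix.mul_sub, Matrix.sub_mul, Matrix.mul_assoc]
  abel

theorem stmt_5_general {n m : ℕ} (A : Matrix (Fin n) (Fin n) ℝ)
    (C : Matrix (Fin m) (Fin n) ℝ) (Q : Matrix (Fin n) (Fin n) ℝ)
    (W₁ W₂ : Matrix (Fin m) (Fin m) ℝ)
    (hW₁ : W₁.PosDef)
    (hW : (W₂ - W₁).PosSemidef)
    (X : Matrix (Fin n) (Fin n) ℝ) (hX : X.PosSemidef) :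
    (gmap A C Q W₂ X - gmap A C Q W₁ X).PosSemidef := by
  have hCXC : (C * X * Cᵀ).PosSemidef := by
    simpa using hX.mul_mul_conjTranspose_same C
  have hS₁ : (C * X * Cᵀ + W₁).PosDef := PosDef.posSemidef_add hCXC hW₁
  have hinv := hS₁.posSemidef_inv_sub_inv (T := C * X * Cᵀ + W₂) (by simpa using hW)
  have hXt : Xᵀ = X := by simpa using hX.isHermitian.eq
  have hK : C * X * Aᵀ = (A * X * Cᵀ)ᴴ := by simp [hXt, Matrix.mul_assoc]
  rw [gmap_sub_gmap, hK]
  exact hinv.mul_mul_conjTranspose_same _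

/-- Monotonicity of `g_W` in the noise covariance: if `W₁ ≤ W₂` (Loewner order,
both positive definite), then `g_{W₁}(X) ≤ g_{W₂}(X)` for every positive
semidefinite `X`, where `Q` is positive semidefinite. -/
theorem stmt_5 {n m : ℕ} (A : Matrix (Fin n) (Fin n) ℝ)
    (C : Matrix (Fin m) (Fin n) ℝ) (Q : Matrix (Fin n) (Fin n) ℝ)
    (W₁ W₂ : Matrix (Fin m) (Fin m) ℝ)
    (hQ : Q.PosSemidef) (hW₁ : W₁.PosDef) (hW₂ : W₂.PosDef)
    (hW : (W₂ - W₁).PosSemidef)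
    (X : Matrix (Fin n) (Fin n) ℝ) (hX : X.PosSemidef) :
    (gmap A C Q W₂ X - gmap A C Q W₁ X).PosSemidef :=
  stmt_5_general A C Q W₁ W₂ hW₁ hW X hX
end

section
/- Let A be an n×n real matrix, C an m×n real matrix, Q a symmetric positive semidefinite n×n real matrix, R and Y symmetric positive definite m×m real matrices, and Σ₀ a symmetric positive definite n×n real matrix. Define g_W(X) = A X Aᵀ + Q − A X Cᵀ(C X Cᵀ + W)⁻¹ C X Aᵀ. Let γ : ℕ → {0,1} be an arbitrary sequence and define P₀ = Σ₀ and P_{k+1} = g_{R + (1 − γ_k) Y⁻¹}(P_k), i.e., P_{k+1} = g_R(P_k) if γ_k = 1 and P_{k+1} = g_{R + Y⁻¹}(P_k) if γ_k = 0. Then for every k ≥ 0, g_R^k(Σ₀) ≤ P_k ≤ g_{R+Y⁻¹}^k(Σ₀) in the Loewner order, where g_W^k denotes the k-fold iterate of g_W. -/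
open Matrix

private lemma psd_congrT {p q : ℕ} {M : Matrix (Fin q) (Fin q) ℝ} (hM : M.PosSemidef)
    (B : Matrix (Fin p) (Fin q) ℝ) : (B * M * Bᵀ).PosSemidef := by
  have h := hM.mul_mul_conjTranspose_same B
  rwa [conjTranspose_eq_transpose_of_trivial] at h

private lemma symmT {p : ℕ} {M : Matrix (Fin p) (Fin p) ℝ} (hM : M.PosSemidef) :
    Mᵀ = M := by
  have h := hM.isHermitian.eq
  rwa [conjTranspose_eq_transpose_of_trivial] at h

/-- The gain-form identity for the Riccati map. -/
private lemma gmap_identity {n m : ℕ} (A : Matrix (Fin n) (Fin n) ℝ)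
    (C : Matrix (Fin m) (Fin n) ℝ)
    (W : Matrix (Fin m) (Fin m) ℝ) (X : Matrix (Fin n) (Fin n) ℝ)
    (K' : Matrix (Fin n) (Fin m) ℝ)
    (hX : Xᵀ = X) (hW : Wᵀ = W)
    (hS : IsUnit (C * X * Cᵀ + W).det) :
    (A - K' * C) * X * (A - K' * C)ᵀ + K' * W * K'ᵀ =
      (A * X * Aᵀ - A * X * Cᵀ * (C * X * Cᵀ + W)⁻¹ * C * X * Aᵀ) +
      (K' - A * X * Cᵀ * (C * X * Cᵀ + W)⁻¹) * (C * X * Cᵀ + W) *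
        (K' - A * X * Cᵀ * (C * X * Cᵀ + W)⁻¹)ᵀ := by
  set S := C * X * Cᵀ + W with hSdef
  have hSsymm : Sᵀ = S := by
    simp [hSdef, transpose_add, transpose_mul, hX, hW, Matrix.mul_assoc]
  have hSinvT : S⁻¹ᵀ = S⁻¹ := by rw [transpose_nonsing_inv, hSsymm]
  have h1 : S⁻¹ * S = 1 := nonsing_inv_mul _ hS
  have h2 : S * S⁻¹ = 1 := mul_nonsing_inv _ hS
  simp only [transpose_sub, transpose_mul, hX, hSinvT, transpose_transpose]
  simp only [Matrix.sub_mul, Matrix.mul_sub, Matrix.mul_assoc]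
  rw [show S * (S⁻¹ * (C * (X * Aᵀ))) = C * (X * Aᵀ) by
    rw [← Matrix.mul_assoc, h2, Matrix.one_mul]]
  rw [show S⁻¹ * (S * K'ᵀ) = K'ᵀ by rw [← Matrix.mul_assoc, h1, Matrix.one_mul]]
  simp only [hSdef]
  simp only [Matrix.add_mul, Matrix.mul_add, Matrix.mul_assoc]
  noncomm_ring

private lemma gmap_eq_phi {n m : ℕ} (A : Matrix (Fin n) (Fin n) ℝ)
    (C : Matrix (Fin m) (Fin n) ℝ) (Q : Matrix (Fin n) (Fin n) ℝ)
    {W : Matrix (Fin m) (Fin m) ℝ} {X : Matrix (Fin n) (Fin n) ℝ}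
    (hQ : Q.PosSemidef) (hW : W.PosDef) (hX : X.PosSemidef) :
    (C * X * Cᵀ + W).PosDef ∧
    gmap A C Q W X =
      (A - (A * X * Cᵀ * (C * X * Cᵀ + W)⁻¹) * C) * X *
        (A - (A * X * Cᵀ * (C * X * Cᵀ + W)⁻¹) * C)ᵀ +
      (A * X * Cᵀ * (C * X * Cᵀ + W)⁻¹) * W * (A * X * Cᵀ * (C * X * Cᵀ + W)⁻¹)ᵀ + Q := by
  have hCXC : (C * X * Cᵀ).PosSemidef := psd_congrT hX C
  have hS : (C * X * Cᵀ + W).PosDef := Matrix.PosDef.posSemidef_add hCXC hW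
  refine ⟨hS, ?_⟩
  have hid := gmap_identity A C W X (A * X * Cᵀ * (C * X * Cᵀ + W)⁻¹)
    (symmT hX) (symmT hW.posSemidef) ((isUnit_iff_isUnit_det _).mp hS.isUnit)
  rw [sub_self, Matrix.zero_mul, Matrix.zero_mul, add_zero] at hid
  rw [gmap, hid]
  abel

/-- Monotonicity of the Riccati map in both arguments (Loewner order). -/
private lemma gmap_mono {n m : ℕ} (A : Matrix (Fin n) (Fin n) ℝ)
    (C : Matrix (Fin m) (Fin n) ℝ) (Q : Matrix (Fin n) (Fin n) ℝ)
    {W W' : Matrix (Fin m) (Fin m) ℝ} {X X' : Matrix (Fin n) (Fin n) ℝ}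
    (hQ : Q.PosSemidef) (hW : W.PosDef) (hW' : W'.PosDef)
    (hX : X.PosSemidef) (hX' : X'.PosSemidef)
    (hXX : (X' - X).PosSemidef) (hWW : (W' - W).PosSemidef) :
    (gmap A C Q W' X' - gmap A C Q W X).PosSemidef := by
  set K' := A * X' * Cᵀ * (C * X' * Cᵀ + W')⁻¹ with hK'def
  obtain ⟨hS', hg'⟩ := gmap_eq_phi A C Q hQ hW' hX'
  have hCXC : (C * X * Cᵀ).PosSemidef := psd_congrT hX C
  have hS : (C * X * Cᵀ + W).PosDef := Matrix.PosDef.posSemidef_add hCXC hW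
  have hid := gmap_identity A C W X K'
    (symmT hX) (symmT hW.posSemidef) ((isUnit_iff_isUnit_det _).mp hS.isUnit)
  have hg : gmap A C Q W X =
      (A - K' * C) * X * (A - K' * C)ᵀ + K' * W * K'ᵀ + Q -
      (K' - A * X * Cᵀ * (C * X * Cᵀ + W)⁻¹) * (C * X * Cᵀ + W) *
        (K' - A * X * Cᵀ * (C * X * Cᵀ + W)⁻¹)ᵀ := by
    rw [gmap, hid]; abel
  have key : gmap A C Q W' X' - gmap A C Q W X =
      (A - K' * C) * (X' - X) * (A - K' * C)ᵀ + K' * (W' - W) * K'ᵀ +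
      (K' - A * X * Cᵀ * (C * X * Cᵀ + W)⁻¹) * (C * X * Cᵀ + W) *
        (K' - A * X * Cᵀ * (C * X * Cᵀ + W)⁻¹)ᵀ := by
    rw [hg', hg]
    simp only [Matrix.mul_sub, Matrix.sub_mul]
    abel
  rw [key]
  exact ((psd_congrT hXX _).add (psd_congrT hWW _)).add (psd_congrT hS.posSemidef _)

private lemma gmap_psd {n m : ℕ} (A : Matrix (Fin n) (Fin n) ℝ)
    (C : Matrix (Fin m) (Fin n) ℝ) (Q : Matrix (Fin n) (Fin n) ℝ)
    {W : Matrix (Fin m) (Fin m) ℝ} {X : Matrix (Fin n) (Fin n) ℝ}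
    (hQ : Q.PosSemidef) (hW : W.PosDef) (hX : X.PosSemidef) :
    (gmap A C Q W X).PosSemidef := by
  obtain ⟨hS, hg⟩ := gmap_eq_phi A C Q hQ hW hX
  rw [hg]
  exact ((psd_congrT hX _).add (psd_congrT hW.posSemidef _)).add hQ

/-- Under the OLSET-KF recursion `P₀ = Sig0`,
`P_{k+1} = g_{R + (1 − γ_k)Y⁻¹}(P_k)` with an arbitrary sequence
`γ : ℕ → {0,1}`, the prediction error covariance is sandwiched in the Loewner
order between the all-receive and all-drop iterations:
`g_R^k(Sig0) ≤ P_k ≤ g_{R+Y⁻¹}^k(Sig0)` for every `k`. -/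
theorem stmt_8 {n m : ℕ} (A : Matrix (Fin n) (Fin n) ℝ)
    (C : Matrix (Fin m) (Fin n) ℝ) (Q : Matrix (Fin n) (Fin n) ℝ)
    (R Y : Matrix (Fin m) (Fin m) ℝ) (Sig0 : Matrix (Fin n) (Fin n) ℝ)
    (hQ : Q.PosSemidef) (hR : R.PosDef) (hY : Y.PosDef) (hSig0 : Sig0.PosDef)
    (γ : ℕ → ℕ) (hγ : ∀ k, γ k = 0 ∨ γ k = 1)
    (P : ℕ → Matrix (Fin n) (Fin n) ℝ)
    (hP0 : P 0 = Sig0)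
    (hPrec : ∀ k, P (k + 1) =
      gmap A C Q (R + ((1 : ℝ) - (γ k : ℝ)) • Y⁻¹) (P k)) :
    ∀ k, (P k - (gmap A C Q R)^[k] Sig0).PosSemidef ∧
      ((gmap A C Q (R + Y⁻¹))^[k] Sig0 - P k).PosSemidef := by
  have hYinv : (Y⁻¹).PosDef := hY.inv
  have hRY : (R + Y⁻¹).PosDef := hR.add hYinv
  -- facts about Wₖ := R + (1 - γ k) • Y⁻¹
  have hWk : ∀ k, (R + ((1 : ℝ) - (γ k : ℝ)) • Y⁻¹).PosDef ∧
      ((R + ((1 : ℝ) - (γ k : ℝ)) • Y⁻¹) - R).PosSemidef ∧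
      ((R + Y⁻¹) - (R + ((1 : ℝ) - (γ k : ℝ)) • Y⁻¹)).PosSemidef := by
    intro k
    rcases hγ k with h | h <;> rw [h]
    · simp only [Nat.cast_zero, sub_zero, one_smul]
      exact ⟨hRY, by simpa using hYinv.posSemidef, by simp [Matrix.PosSemidef.zero]⟩
    · simp only [Nat.cast_one, sub_self, zero_smul, add_zero]
      exact ⟨hR, by simp [Matrix.PosSemidef.zero], by simpa using hYinv.posSemidef⟩
  have main : ∀ k, (P k).PosSemidef ∧
      ((gmap A C Q R)^[k] Sig0).PosSemidef ∧
      ((gmap A C Q (R + Y⁻¹))^[k] Sig0).PosSemidef ∧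
      (P k - (gmap A C Q R)^[k] Sig0).PosSemidef ∧
      ((gmap A C Q (R + Y⁻¹))^[k] Sig0 - P k).PosSemidef := by
    intro k
    induction k with
    | zero =>
      simp only [Function.iterate_zero, id_eq, hP0, sub_self]
      exact ⟨hSig0.posSemidef, hSig0.posSemidef, hSig0.posSemidef,
        Matrix.PosSemidef.zero, Matrix.PosSemidef.zero⟩
    | succ k ih =>
      obtain ⟨hPk, hLk, hUk, hlow, hup⟩ := ih
      obtain ⟨hWkpd, hWkR, hRYWk⟩ := hWk k
      rw [hPrec k, Function.iterate_succ_apply', Function.iterate_succ_apply']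
      refine ⟨gmap_psd A C Q hQ hWkpd hPk,
        gmap_psd A C Q hQ hR hLk,
        gmap_psd A C Q hQ hRY hUk, ?_, ?_⟩
      · exact gmap_mono A C Q hQ hR hWkpd hLk hPk hlow hWkR
      · exact gmap_mono A C Q hQ hWkpd hRY hPk hUk hup hRYWk
  exact fun k => ⟨(main k).2.2.2.1, (main k).2.2.2.2⟩
end

section
/- Let A be an n×n real matrix, C an m×n real matrix, Q a symmetric positive semidefinite n×n real matrix, R and Y symmetric positive definite m×m real matrices, and Σ₀ a symmetric positive definite n×n real matrix. Define g_W(X) = A X Aᵀ + Q − A X Cᵀ(C X Cᵀ + W)⁻¹ C X Aᵀ. Let γ : ℕ → {0,1} and define P₀ = Σ₀, P_{k+1} = g_{R + (1 − γ_k) Y⁻¹}(P_k). If γ_k = γ_{k+1} = ⋯ = γ_{k+l−1} = 0 for some k ≥ 0 and l ≥ 1 (l consecutive packet drops), then P_{k+l} ≥ g_{R+Y⁻¹}^l(0) in the Loewner order, where g_{R+Y⁻¹}^l denotes the l-fold iterate of g_{R+Y⁻¹} and 0 is the zero matrix. -/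
/-!
Completing the square in the gain `K` shows that
`g_W(X) = min_K [(A - K C) X (A - K C)ᵀ + K W Kᵀ + Q]`, the minimum being attained at the
Kalman gain `A X Cᵀ (C X Cᵀ + W)⁻¹`. Each map in the minimum is monotone and preserves
positive semidefiniteness, hence so does `g_W`. During `l` consecutive drops the recursion is
`P_{k+l} = g_{R+Y⁻¹}^l(P_k)` with `P_k ≥ 0`, and monotonicity of the iterate gives
`P_{k+l} ≥ g_{R+Y⁻¹}^l(0)`.
-/

open Matrix

open scoped MatrixOrder

theorem MonotoneOn.iterate {α : Type*} [Preorder α] {f : α → α} {s : Set α}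
    (hf : MonotoneOn f s) (hs : Set.MapsTo f s s) (l : ℕ) : MonotoneOn f^[l] s := by
  induction l with
  | zero => exact monotoneOn_id
  | succ l ih =>
    rw [Function.iterate_succ']
    exact hf.comp ih (hs.iterate l)

theorem apply_add_eq_iterate {α : Type*} {f : α → α} {u : ℕ → α} {k l : ℕ}
    (h : ∀ i < l, u (k + i + 1) = f (u (k + i))) : u (k + l) = f^[l] (u k) := by
  induction l with
  | zero => rfl
  | succ l ih =>
    rw [Function.iterate_succ_apply', ← ih fun i hi ↦ h i (hi.trans l.lt_succ_self)]
    exact h l l.lt_succ_self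

namespace Matrix

variable {p q : Type*} [Fintype p] [Fintype q]

omit [Fintype p] in
theorem PosSemidef.transpose_eq {X : Matrix p p ℝ} (hX : X.PosSemidef) : Xᵀ = X := by
  simpa using hX.isHermitian.eq

theorem PosSemidef.mul_mul_transpose_same {X : Matrix q q ℝ} (hX : X.PosSemidef)
    (B : Matrix p q ℝ) : (B * X * Bᵀ).PosSemidef := by
  simpa using hX.mul_mul_conjTranspose_same B

theorem mul_mul_transpose_le_mul_mul_transpose {X Z : Matrix q q ℝ} (h : X ≤ Z)
    (B : Matrix p q ℝ) : B * X * Bᵀ ≤ B * Z * Bᵀ := by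
  rw [le_iff, ← Matrix.sub_mul, ← Matrix.mul_sub]
  exact (le_iff.mp h).mul_mul_transpose_same B

end Matrix

section Riccati

variable {n m : ℕ} (A : Matrix (Fin n) (Fin n) ℝ) (C : Matrix (Fin m) (Fin n) ℝ)
  (Q : Matrix (Fin n) (Fin n) ℝ) (W : Matrix (Fin m) (Fin m) ℝ)

/-- Joseph form: the prediction error covariance of the filter with an arbitrary gain `K`. -/
def josephMap (K : Matrix (Fin n) (Fin m) ℝ) (X : Matrix (Fin n) (Fin n) ℝ) :
    Matrix (Fin n) (Fin n) ℝ :=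
  (A - K * C) * X * (A - K * C)ᵀ + K * W * Kᵀ + Q

noncomputable def kalmanGain (X : Matrix (Fin n) (Fin n) ℝ) : Matrix (Fin n) (Fin m) ℝ :=
  A * X * Cᵀ * (C * X * Cᵀ + W)⁻¹

variable {A C Q W}

theorem josephMap_eq_gmap_add (K : Matrix (Fin n) (Fin m) ℝ) {X : Matrix (Fin n) (Fin n) ℝ}
    (hX : X.PosSemidef) (hW : W.PosDef) :
    josephMap A C Q W K X = gmap A C Q W X
      + (K - kalmanGain A C W X) * (C * X * Cᵀ + W) * (K - kalmanGain A C W X)ᵀ := by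
  set S := C * X * Cᵀ + W with hS_def
  set G := A * X * Cᵀ with hG_def
  have hS : S.PosDef := hW.posSemidef_add (hX.mul_mul_transpose_same C)
  have hdet : IsUnit S.det := (isUnit_iff_isUnit_det _).mp hS.isUnit
  have hGT : Gᵀ = C * X * Aᵀ := by
    simp only [hG_def, transpose_mul, transpose_transpose, hX.transpose_eq, Matrix.mul_assoc]
  have hsq : (K - G * S⁻¹) * S * (K - G * S⁻¹)ᵀ
      = K * S * Kᵀ - K * Gᵀ - G * Kᵀ + G * S⁻¹ * Gᵀ := by
    rw [transpose_sub, transpose_mul, transpose_nonsing_inv, hS.posSemidef.transpose_eq]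
    simp only [Matrix.sub_mul, Matrix.mul_sub, Matrix.mul_assoc,
      nonsing_inv_mul_cancel_left _ _ hdet, mul_nonsing_inv_cancel_left _ _ hdet]
    abel
  have hG : gmap A C Q W X = A * X * Aᵀ + Q - G * S⁻¹ * Gᵀ := by
    rw [hGT, hG_def, hS_def]
    simp only [gmap, Matrix.mul_assoc]
  rw [josephMap, kalmanGain, hsq, hG, hGT, hS_def]
  simp only [hG_def, transpose_sub, transpose_mul, Matrix.mul_sub, Matrix.sub_mul, Matrix.mul_add,
    Matrix.add_mul, Matrix.mul_assoc]
  abel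

theorem josephMap_kalmanGain {X : Matrix (Fin n) (Fin n) ℝ} (hX : X.PosSemidef) (hW : W.PosDef) :
    josephMap A C Q W (kalmanGain A C W X) X = gmap A C Q W X := by
  simp [josephMap_eq_gmap_add _ hX hW]

theorem gmap_le_josephMap (K : Matrix (Fin n) (Fin m) ℝ) {X : Matrix (Fin n) (Fin n) ℝ}
    (hX : X.PosSemidef) (hW : W.PosDef) : gmap A C Q W X ≤ josephMap A C Q W K X := by
  rw [josephMap_eq_gmap_add K hX hW]
  exact le_add_of_nonneg_right
    ((hW.posSemidef_add (hX.mul_mul_transpose_same C)).posSemidef.mul_mul_transpose_same _).nonneg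

theorem josephMap_mono (K : Matrix (Fin n) (Fin m) ℝ) {X Z : Matrix (Fin n) (Fin n) ℝ}
    (hXZ : X ≤ Z) : josephMap A C Q W K X ≤ josephMap A C Q W K Z :=
  add_le_add_left (add_le_add_left (mul_mul_transpose_le_mul_mul_transpose hXZ _) _) _

theorem josephMap_posSemidef (K : Matrix (Fin n) (Fin m) ℝ) {X : Matrix (Fin n) (Fin n) ℝ}
    (hQ : Q.PosSemidef) (hW : W.PosSemidef) (hX : X.PosSemidef) :
    (josephMap A C Q W K X).PosSemidef :=
  ((hX.mul_mul_transpose_same _).add (hW.mul_mul_transpose_same K)).add hQ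

theorem gmap_posSemidef {X : Matrix (Fin n) (Fin n) ℝ} (hQ : Q.PosSemidef) (hW : W.PosDef)
    (hX : X.PosSemidef) : (gmap A C Q W X).PosSemidef :=
  josephMap_kalmanGain hX hW ▸ josephMap_posSemidef _ hQ hW.posSemidef hX

theorem gmap_monotoneOn (hW : W.PosDef) : MonotoneOn (gmap A C Q W) {X | X.PosSemidef} :=
  fun X hX Z hZ hXZ ↦ calc
    gmap A C Q W X ≤ josephMap A C Q W (kalmanGain A C W Z) X := gmap_le_josephMap _ hX hW
    _ ≤ josephMap A C Q W (kalmanGain A C W Z) Z := josephMap_mono _ hXZ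
    _ = gmap A C Q W Z := josephMap_kalmanGain hZ hW

end Riccati

theorem stmt_9_general {n m : ℕ} (A : Matrix (Fin n) (Fin n) ℝ)
    (C : Matrix (Fin m) (Fin n) ℝ) (Q : Matrix (Fin n) (Fin n) ℝ)
    (R Y : Matrix (Fin m) (Fin m) ℝ) (Sig0 : Matrix (Fin n) (Fin n) ℝ)
    (hQ : Q.PosSemidef) (hR : R.PosDef) (hY : Y.PosDef) (hSig0 : Sig0.PosDef)
    (γ : ℕ → ℕ) (hγ : ∀ k, γ k = 0 ∨ γ k = 1)
    (P : ℕ → Matrix (Fin n) (Fin n) ℝ)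
    (hP0 : P 0 = Sig0)
    (hPrec : ∀ k, P (k + 1) =
      gmap A C Q (R + ((1 : ℝ) - (γ k : ℝ)) • Y⁻¹) (P k))
    (k l : ℕ) (hdrop : ∀ i < l, γ (k + i) = 0) :
    (P (k + l) - (gmap A C Q (R + Y⁻¹))^[l] 0).PosSemidef := by
  have hRY : (R + Y⁻¹).PosDef := hR.add hY.inv
  have hW (j : ℕ) : (R + ((1 : ℝ) - (γ j : ℝ)) • Y⁻¹).PosDef := by
    rcases hγ j with h | h <;> simp [h, hR, hRY]
  have hP (j : ℕ) : (P j).PosSemidef := by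
    induction j with
    | zero => exact hP0 ▸ hSig0.posSemidef
    | succ j ih => exact (hPrec j).symm ▸ gmap_posSemidef hQ (hW j) ih
  have hrun : P (k + l) = (gmap A C Q (R + Y⁻¹))^[l] (P k) :=
    apply_add_eq_iterate fun i hi ↦ by simpa [hdrop i hi] using hPrec (k + i)
  rw [← le_iff, hrun]
  exact (gmap_monotoneOn hRY).iterate (fun _ ↦ gmap_posSemidef hQ hRY) l
    PosSemidef.zero (hP k) (hP k).nonneg

/-- Under the OLSET-KF recursion `P₀ = Σ₀`, `P_{k+1} = g_{R + (1 − γ_k)Y⁻¹}(P_k)`,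
if `l ≥ 1` consecutive packets are dropped starting at time `k`
(`γ_k = ⋯ = γ_{k+l−1} = 0`), then `P_{k+l} ≥ g_{R+Y⁻¹}^l(0)` in the Loewner
order. -/
theorem stmt_9 {n m : ℕ} (A : Matrix (Fin n) (Fin n) ℝ)
    (C : Matrix (Fin m) (Fin n) ℝ) (Q : Matrix (Fin n) (Fin n) ℝ)
    (R Y : Matrix (Fin m) (Fin m) ℝ) (Sig0 : Matrix (Fin n) (Fin n) ℝ)
    (hQ : Q.PosSemidef) (hR : R.PosDef) (hY : Y.PosDef) (hSig0 : Sig0.PosDef)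
    (γ : ℕ → ℕ) (hγ : ∀ k, γ k = 0 ∨ γ k = 1)
    (P : ℕ → Matrix (Fin n) (Fin n) ℝ)
    (hP0 : P 0 = Sig0)
    (hPrec : ∀ k, P (k + 1) =
      gmap A C Q (R + ((1 : ℝ) - (γ k : ℝ)) • Y⁻¹) (P k))
    (k l : ℕ) (hl : 1 ≤ l) (hdrop : ∀ i < l, γ (k + i) = 0) :
    (P (k + l) - (gmap A C Q (R + Y⁻¹))^[l] 0).PosSemidef :=
  stmt_9_general A C Q R Y Sig0 hQ hR hY hSig0 γ hγ P hP0 hPrec k l hdrop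
end

section
/- Let Π and Y be symmetric positive definite m×m real matrices with m ≥ 2, and set γ = 1 − (det(I + Π Y))^{−1/2}. Then 1 − (1 + tr(Π Y))^{−1/2} < γ < 1 − exp(−½ tr(Π Y)). -/
/-!
After a congruence, `Π Y` has the same `det (1 + ·)` and trace as a positive definite matrix
with eigenvalues `μᵢ > 0`, so `det (I + Π Y) = ∏ (1 + μᵢ)` and `tr (Π Y) = ∑ μᵢ`. With at
least two eigenvalues, `1 + ∑ μᵢ < ∏ (1 + μᵢ) < exp (∑ μᵢ)`, and `x ↦ 1 - x ^ (-1/2)` is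
strictly increasing.
-/

open Matrix

namespace Matrix

variable {𝕜 n : Type*} [RCLike 𝕜] [Fintype n] [DecidableEq n]

lemma IsHermitian.det_one_add {A : Matrix n n 𝕜} (hA : A.IsHermitian) :
    det (1 + A) = ∏ i, (1 + (hA.eigenvalues i : 𝕜)) := by
  conv_lhs => rw [hA.spectral_theorem,
    ← map_one (Unitary.conjStarAlgAut 𝕜 _ hA.eigenvectorUnitary), ← map_add]
  simp only [← diagonal_one, diagonal_add, Function.comp_apply, det_map, det_diagonal]

open scoped ComplexOrder MatrixOrder in
/-- Writing `P = Cᴴ C`, Sylvester's identity and cyclicity of the trace replace `P Y` by the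
positive definite congruence `C Y Cᴴ`. -/
lemma PosDef.exists_posDef_det_one_add_mul_eq {P Y : Matrix n n 𝕜} (hP : P.PosDef)
    (hY : Y.PosDef) :
    ∃ B : Matrix n n 𝕜, B.PosDef ∧ det (1 + P * Y) = det (1 + B) ∧
      trace (P * Y) = trace B := by
  obtain ⟨C, hC, rfl⟩ := CStarAlgebra.isStrictlyPositive_iff_eq_star_mul_self.mp
    hP.isStrictlyPositive
  refine ⟨C * Y * Cᴴ,
    hY.mul_mul_conjTranspose_same (vecMul_injective_iff_isUnit.mpr hC), ?_, ?_⟩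
  · rw [mul_assoc, det_one_add_mul_comm, star_eq_conjTranspose]
  · rw [mul_assoc, trace_mul_comm, star_eq_conjTranspose]

end Matrix

namespace Finset

variable {ι R : Type*} [CommRing R] [LinearOrder R] [IsStrictOrderedRing R]

lemma one_add_sum_le_prod_one_add (s : Finset ι) {f : ι → R} (hf : ∀ i ∈ s, 0 ≤ f i) :
    1 + ∑ i ∈ s, f i ≤ ∏ i ∈ s, (1 + f i) := by
  classical
  induction s using Finset.induction with
  | empty => simp
  | insert a s ha ih =>
    rw [sum_insert ha, prod_insert ha]
    have hfa : 0 ≤ f a := hf a (mem_insert_self a s)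
    have hs : ∀ i ∈ s, 0 ≤ f i := fun i hi ↦ hf i (mem_insert_of_mem hi)
    nlinarith [ih hs, sum_nonneg hs]

lemma one_add_sum_lt_prod_one_add {s : Finset ι} (hs : 1 < #s) {f : ι → R}
    (hf : ∀ i ∈ s, 0 < f i) : 1 + ∑ i ∈ s, f i < ∏ i ∈ s, (1 + f i) := by
  classical
  obtain ⟨a, ha⟩ := card_pos.mp (zero_lt_one.trans hs)
  have hrest : (s.erase a).Nonempty := by
    rw [← card_pos, card_erase_of_mem ha]; omega
  have hle := one_add_sum_le_prod_one_add (s.erase a) fun i hi ↦ (hf i (mem_of_mem_erase hi)).le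
  have hpos := sum_pos (fun i hi ↦ hf i (mem_of_mem_erase hi)) hrest
  rw [← add_sum_erase s f ha, ← mul_prod_erase s _ ha]
  nlinarith [hf a ha]

end Finset

lemma Real.prod_one_add_lt_exp_sum {ι : Type*} {s : Finset ι} (hs : s.Nonempty) {f : ι → ℝ}
    (hf : ∀ i ∈ s, 0 < f i) : ∏ i ∈ s, (1 + f i) < exp (∑ i ∈ s, f i) := by
  rw [exp_sum]
  refine Finset.prod_lt_prod_of_nonempty (fun i hi ↦ by linarith [hf i hi]) (fun i hi ↦ ?_) hs
  exact (add_comm _ _).trans_lt (add_one_lt_exp (hf i hi).ne')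

/-- Bounds on the open-loop communication rate `γ = 1 − (det(I + Π Y))^{−1/2}`
for symmetric positive definite `Π, Y` with `m ≥ 2`:
`1 − (1 + tr(Π Y))^{−1/2} < γ < 1 − exp(−½ tr(Π Y))`. -/
theorem stmt_12 {m : ℕ} (hm : 2 ≤ m) (Pmat Y : Matrix (Fin m) (Fin m) ℝ)
    (hP : Pmat.PosDef) (hY : Y.PosDef)
    (γ : ℝ) (hγ : γ = 1 - ((1 + Pmat * Y).det) ^ (-(1 : ℝ) / 2)) :
    1 - (1 + (Pmat * Y).trace) ^ (-(1 : ℝ) / 2) < γ ∧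
      γ < 1 - Real.exp (-(1 / 2) * (Pmat * Y).trace) := by
  obtain ⟨B, hB, hdet, htr⟩ := hP.exists_posDef_det_one_add_mul_eq hY
  set μ := hB.isHermitian.eigenvalues
  have hμ : ∀ i ∈ Finset.univ, 0 < μ i := fun i _ ↦ hB.eigenvalues_pos i
  have hcard : 1 < (Finset.univ : Finset (Fin m)).card := by rw [Finset.card_fin]; omega
  have huniv : (Finset.univ : Finset (Fin m)).Nonempty := Finset.card_pos.mp (by omega)
  have hdet_eq : det (1 + B) = ∏ i, (1 + μ i) := by simpa using hB.isHermitian.det_one_add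
  have htr_eq : trace B = ∑ i, μ i := by simpa using hB.isHermitian.trace_eq_sum_eigenvalues
  have hsum_pos : 0 < ∑ i, μ i := Finset.sum_pos hμ huniv
  have hlower := Finset.one_add_sum_lt_prod_one_add hcard hμ
  have hupper := Real.prod_one_add_lt_exp_sum huniv hμ
  have hexp : Real.exp (-(1 / 2) * ∑ i, μ i) = Real.exp (∑ i, μ i) ^ (-(1 : ℝ) / 2) := by
    rw [← Real.exp_mul]; ring_nf
  rw [hγ, hdet, htr, hdet_eq, htr_eq, hexp]
  constructor <;> gcongr 1 - ?_
  · exact Real.rpow_lt_rpow_of_neg (by linarith) hlower (by norm_num)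
  · exact Real.rpow_lt_rpow_of_neg (by linarith) hupper (by norm_num)
end

section
/- Let A be an n×n real matrix, C an m×n real matrix, and Q an n×n, R an m×m, Y an m×m symmetric positive definite real matrix, with S an n×n symmetric positive definite real matrix. Then the inequality (A S⁻¹ Aᵀ + Q)⁻¹ − S + Cᵀ(R + Y⁻¹)⁻¹C > 0 holds if and only if the 2×2 block matrix fromBlocks (Q⁻¹ − S + Cᵀ(R + Y⁻¹)⁻¹C) (Q⁻¹A) (AᵀQ⁻¹) (AᵀQ⁻¹A + S) is positive definite. -/
/-!
By the Woodbury identity, `(A S⁻¹ Aᵀ + Q)⁻¹ = Q⁻¹ - Q⁻¹A (AᵀQ⁻¹A + S)⁻¹ AᵀQ⁻¹`, so the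
left-hand matrix is the Schur complement of the positive definite block `AᵀQ⁻¹A + S` in the
block matrix, with the summand `Cᵀ(R + Y⁻¹)⁻¹C - S` carried along in the upper-left block.
The Schur complement criterion for positive definiteness then gives the equivalence.
-/

open Matrix

namespace Matrix

variable {m n : Type*} [Fintype m] [Fintype n] [DecidableEq n]
variable {R : Type*} [CommRing R] [PartialOrder R] [StarRing R] [StarOrderedRing R]

theorem posDef_fromBlocks₂₂_iff (A : Matrix m m R) (B : Matrix m n R) {D : Matrix n n R}
    (hD : D.PosDef) [Invertible D] :
    (fromBlocks A B Bᴴ D).PosDef ↔ (A - B * D⁻¹ * Bᴴ).PosDef := by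
  rw [posDef_iff_dotProduct_mulVec, posDef_iff_dotProduct_mulVec,
    IsHermitian.fromBlocks₂₂ _ _ hD.1]
  refine and_congr_right fun _ => ⟨fun h x hx => ?_, fun h z hz => ?_⟩
  · have hx' : x ⊕ᵥ -((D⁻¹ * Bᴴ) *ᵥ x) ≠ 0 := fun h0 =>
      hx (funext fun i => congrFun h0 (.inl i))
    have := h hx'
    rwa [dotProduct_mulVec, schur_complement_eq₂₂ A B _ _ hD.1, add_neg_cancel, star_zero,
      zero_vecMul, zero_dotProduct, zero_add, ← dotProduct_mulVec] at this
  · rw [dotProduct_mulVec, ← Sum.elim_comp_inl_inr z, schur_complement_eq₂₂ A B _ _ hD.1,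
      ← dotProduct_mulVec, ← dotProduct_mulVec]
    rcases eq_or_ne (z ∘ Sum.inl) 0 with hx | hx
    · have hy : z ∘ Sum.inr ≠ 0 := fun hy => hz <| by
        rw [← Sum.elim_comp_inl_inr z, hx, hy]; ext (i | i) <;> rfl
      simpa [hx] using hD.dotProduct_mulVec_pos hy
    · exact add_pos_of_nonneg_of_pos (hD.posSemidef.dotProduct_mulVec_nonneg _) (h hx)

end Matrix

namespace Matrix.PosDef

variable {n k : Type*} [Fintype n] [Fintype k] [DecidableEq n]
variable {K : Type*} [Field K] [PartialOrder K] [StarRing K] [StarOrderedRing K]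
variable {Q : Matrix n n K} {S : Matrix k k K}

theorem conjTranspose_mul_inv_mul_add (hQ : Q.PosDef) (hS : S.PosDef) (A : Matrix n k K) :
    (Aᴴ * Q⁻¹ * A + S).PosDef :=
  PosDef.posSemidef_add (hQ.inv.posSemidef.conjTranspose_mul_mul_same A) hS

variable [DecidableEq k]

theorem mul_inv_mul_conjTranspose_add_inv_eq_sub (hQ : Q.PosDef) (hS : S.PosDef)
    (A : Matrix n k K) :
    (A * S⁻¹ * Aᴴ + Q)⁻¹ = Q⁻¹ - Q⁻¹ * A * (Aᴴ * Q⁻¹ * A + S)⁻¹ * (Aᴴ * Q⁻¹) := by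
  have hSS : S⁻¹⁻¹ = S :=
    nonsing_inv_nonsing_inv S ((isUnit_iff_isUnit_det S).mp hS.isUnit)
  have hunit : IsUnit (S⁻¹⁻¹ + Aᴴ * Q⁻¹ * A) := by
    rw [hSS, add_comm]; exact (conjTranspose_mul_inv_mul_add hQ hS A).isUnit
  rw [add_comm, add_mul_mul_inv_eq_sub Q A S⁻¹ Aᴴ hQ.isUnit hS.inv.isUnit hunit, hSS,
    add_comm S, Matrix.mul_assoc (Q⁻¹ * A * _)]

theorem posDef_inv_add_iff_posDef_fromBlocks (hQ : Q.PosDef) (hS : S.PosDef)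
    (A : Matrix n k K) (E : Matrix n n K) :
    ((A * S⁻¹ * Aᴴ + Q)⁻¹ + E).PosDef ↔
      (fromBlocks (Q⁻¹ + E) (Q⁻¹ * A) (Aᴴ * Q⁻¹) (Aᴴ * Q⁻¹ * A + S)).PosDef := by
  have hD := conjTranspose_mul_inv_mul_add hQ hS A
  let := hD.isUnit.invertible
  have hB : (Q⁻¹ * A)ᴴ = Aᴴ * Q⁻¹ := by rw [conjTranspose_mul, hQ.isHermitian.inv.eq]
  have schur := posDef_fromBlocks₂₂_iff (Q⁻¹ + E) (Q⁻¹ * A) hD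
  rw [hB] at schur
  rw [schur, mul_inv_mul_conjTranspose_add_inv_eq_sub hQ hS, sub_add_eq_add_sub]

end Matrix.PosDef

theorem stmt_13_general {n m : ℕ} (A : Matrix (Fin n) (Fin n) ℝ)
    (C : Matrix (Fin m) (Fin n) ℝ)
    (Q : Matrix (Fin n) (Fin n) ℝ) (R Y : Matrix (Fin m) (Fin m) ℝ)
    (S : Matrix (Fin n) (Fin n) ℝ)
    (hQ : Q.PosDef) (hS : S.PosDef) :
    ((A * S⁻¹ * Aᵀ + Q)⁻¹ - S + Cᵀ * (R + Y⁻¹)⁻¹ * C).PosDef ↔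
      (fromBlocks (Q⁻¹ - S + Cᵀ * (R + Y⁻¹)⁻¹ * C) (Q⁻¹ * A)
        (Aᵀ * Q⁻¹) (Aᵀ * Q⁻¹ * A + S)).PosDef := by
  have regroup : ∀ X : Matrix (Fin n) (Fin n) ℝ,
      X - S + Cᵀ * (R + Y⁻¹)⁻¹ * C = X + (Cᵀ * (R + Y⁻¹)⁻¹ * C - S) := fun X => by abel
  simpa only [regroup, conjTranspose_eq_transpose_of_trivial] using
    hQ.posDef_inv_add_iff_posDef_fromBlocks hS A (Cᵀ * (R + Y⁻¹)⁻¹ * C - S)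

/-- Schur-complement equivalence used in the event parameter design: for
symmetric positive definite `Q, R, Y, S`,
`(A S⁻¹ Aᵀ + Q)⁻¹ − S + Cᵀ(R + Y⁻¹)⁻¹C > 0` holds if and only if the block
matrix `[[Q⁻¹ − S + Cᵀ(R + Y⁻¹)⁻¹C, Q⁻¹A], [AᵀQ⁻¹, AᵀQ⁻¹A + S]]` is positive
definite. -/
theorem stmt_13 {n m : ℕ} (A : Matrix (Fin n) (Fin n) ℝ)
    (C : Matrix (Fin m) (Fin n) ℝ)
    (Q : Matrix (Fin n) (Fin n) ℝ) (R Y : Matrix (Fin m) (Fin m) ℝ)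
    (S : Matrix (Fin n) (Fin n) ℝ)
    (hQ : Q.PosDef) (hR : R.PosDef) (hY : Y.PosDef) (hS : S.PosDef) :
    ((A * S⁻¹ * Aᵀ + Q)⁻¹ - S + Cᵀ * (R + Y⁻¹)⁻¹ * C).PosDef ↔
      (fromBlocks (Q⁻¹ - S + Cᵀ * (R + Y⁻¹)⁻¹ * C) (Q⁻¹ * A)
        (Aᵀ * Q⁻¹) (Aᵀ * Q⁻¹ * A + S)).PosDef :=
  stmt_13_general A C Q R Y S hQ hS
end

section
/- Let A be an n×n real matrix and Q a symmetric positive definite n×n real matrix. Define h(S) = (A S⁻¹ Aᵀ + Q)⁻¹ for symmetric positive definite n×n matrices S. Then h is matrix concave: for all symmetric positive definite S₁, S₂ and all t ∈ [0,1], h(t S₁ + (1 − t) S₂) ≥ t h(S₁) + (1 − t) h(S₂) in the Loewner order. -/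
/-!
By the Woodbury identity, `(A S⁻¹ Aᴴ + Q)⁻¹ = Q⁻¹ - B (S + M)⁻¹ Bᴴ` with `B = Q⁻¹ A` and
`M = Aᴴ Q⁻¹ A ≥ 0`, so concavity reduces to operator convexity of `X ↦ X⁻¹` on positive definite
matrices. That in turn follows from the Schur complement criterion: the block matrix
`[X 1; 1 X⁻¹]` is positive semidefinite, this survives convex combinations, and the Schur
complement of the combined block is `t X⁻¹ + (1 - t) Y⁻¹ - (t X + (1 - t) Y)⁻¹`.
-/

open Matrix
open scoped MatrixOrder ComplexOrder

namespace Matrix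

variable {m n 𝕜 : Type*} [RCLike 𝕜]

theorem convex_setOf_posDef : Convex ℝ {X : Matrix n n 𝕜 | X.PosDef} := by
  intro X hX Y hY a b ha hb hab
  rcases ha.eq_or_lt with rfl | ha
  · obtain rfl : b = 1 := by simpa using hab
    simpa using hY
  · exact (hX.smul ha).add_posSemidef (hY.posSemidef.smul hb)

variable [Fintype m] [Fintype n]

theorem _root_.ConvexOn.mul_mul_conjTranspose_same {E : Type*} [AddCommMonoid E] [SMul ℝ E]
    {s : Set E} {f : E → Matrix n n 𝕜} (hf : ConvexOn ℝ s f) (B : Matrix m n 𝕜) :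
    ConvexOn ℝ s (fun x => B * f x * Bᴴ) := by
  refine ⟨hf.1, fun x hx y hy a b ha hb hab => ?_⟩
  have := (le_iff.mp (hf.2 hx hy ha hb hab)).mul_mul_conjTranspose_same B
  rw [le_iff]
  convert this using 1
  simp only [Matrix.mul_sub, Matrix.sub_mul, Matrix.mul_add, Matrix.add_mul, Matrix.mul_smul,
    Matrix.smul_mul]

variable [DecidableEq n]

theorem PosDef.posSemidef_fromBlocks_one_inv {X : Matrix n n 𝕜} (hX : X.PosDef) :
    (fromBlocks X 1 1 X⁻¹).PosSemidef := by
  have := hX.isUnit.invertible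
  simpa using (PosDef.fromBlocks₁₁ (1 : Matrix n n 𝕜) X⁻¹ hX).mpr (by simpa using .zero)

theorem convexOn_inv : ConvexOn ℝ {X : Matrix n n 𝕜 | X.PosDef} Inv.inv := by
  refine ⟨convex_setOf_posDef, fun X hX Y hY a b ha hb hab => ?_⟩
  have hZ : (a • X + b • Y).PosDef := convex_setOf_posDef hX hY ha hb hab
  have := hZ.isUnit.invertible
  have hblocks : fromBlocks (a • X + b • Y) 1 1 (a • X⁻¹ + b • Y⁻¹) =
      a • fromBlocks X 1 1 X⁻¹ + b • fromBlocks Y 1 1 Y⁻¹ := by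
    rw [fromBlocks_smul, fromBlocks_smul, fromBlocks_add, ← add_smul, hab, one_smul]
  have hpsd := (hX.posSemidef_fromBlocks_one_inv.smul ha).add
    (hY.posSemidef_fromBlocks_one_inv.smul hb)
  have := (PosDef.fromBlocks₁₁ (1 : Matrix n n 𝕜) (a • X⁻¹ + b • Y⁻¹) hZ).mp
    (by rwa [conjTranspose_one, hblocks])
  simpa [le_iff] using this

variable [DecidableEq m]

theorem inv_mul_inv_mul_conjTranspose_add {A : Matrix n m 𝕜} {S : Matrix m m 𝕜}
    {Q : Matrix n n 𝕜} (hS : S.PosDef) (hQ : Q.PosDef) :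
    (A * S⁻¹ * Aᴴ + Q)⁻¹ = Q⁻¹ - Q⁻¹ * A * (S + Aᴴ * Q⁻¹ * A)⁻¹ * Aᴴ * Q⁻¹ := by
  have := hS.isUnit.invertible
  rw [add_comm, add_mul_mul_inv_eq_sub Q A S⁻¹ Aᴴ hQ.isUnit hS.inv.isUnit, inv_inv_of_invertible]
  simpa only [inv_inv_of_invertible] using
    (hS.add_posSemidef (hQ.inv.posSemidef.conjTranspose_mul_mul_same A)).isUnit

theorem concaveOn_inv_mul_inv_mul_conjTranspose_add (A : Matrix n m 𝕜) {Q : Matrix n n 𝕜}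
    (hQ : Q.PosDef) :
    ConcaveOn ℝ {S : Matrix m m 𝕜 | S.PosDef} (fun S => (A * S⁻¹ * Aᴴ + Q)⁻¹) := by
  have hM : (Aᴴ * Q⁻¹ * A).PosSemidef := hQ.inv.posSemidef.conjTranspose_mul_mul_same A
  have hshift : ConvexOn ℝ {S : Matrix m m 𝕜 | S.PosDef} (fun S => (S + Aᴴ * Q⁻¹ * A)⁻¹) :=
    (convexOn_inv.translate_left (Aᴴ * Q⁻¹ * A)).subset
      (fun S hS => by simpa [add_comm] using hS.add_posSemidef hM) convex_setOf_posDef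
  have hQinv : (Q⁻¹ * A)ᴴ = Aᴴ * Q⁻¹ := by
    rw [conjTranspose_mul, hQ.isHermitian.inv.eq]
  refine ((hshift.mul_mul_conjTranspose_same (Q⁻¹ * A)).neg.add_const Q⁻¹).congr
    fun S hS => ?_
  rw [inv_mul_inv_mul_conjTranspose_add hS hQ]
  simp only [Pi.add_apply, Pi.neg_apply, hQinv, Matrix.mul_assoc]
  abel

end Matrix

/-- Matrix concavity of `h(S) = (A S⁻¹ Aᵀ + Q)⁻¹` on symmetric positive
definite matrices, for `Q` symmetric positive definite: for all `t ∈ [0,1]`,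
`h(t S₁ + (1 − t) S₂) ≥ t h(S₁) + (1 − t) h(S₂)` in the Loewner order. -/
theorem stmt_15 {n : ℕ} (A Q : Matrix (Fin n) (Fin n) ℝ) (hQ : Q.PosDef)
    (S₁ S₂ : Matrix (Fin n) (Fin n) ℝ) (hS₁ : S₁.PosDef) (hS₂ : S₂.PosDef)
    (t : ℝ) (ht0 : 0 ≤ t) (ht1 : t ≤ 1) :
    ((A * (t • S₁ + (1 - t) • S₂)⁻¹ * Aᵀ + Q)⁻¹ -
      (t • (A * S₁⁻¹ * Aᵀ + Q)⁻¹ + (1 - t) • (A * S₂⁻¹ * Aᵀ + Q)⁻¹)).PosSemidef := by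
  have := (concaveOn_inv_mul_inv_mul_conjTranspose_add A hQ).2 hS₁ hS₂ ht0 (sub_nonneg.2 ht1)
    (add_sub_cancel t 1)
  rwa [le_iff, conjTranspose_eq_transpose_of_trivial] at this
end
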